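/- arXiv:2009.10206 — 2 statements merged into one kernel-verified Lean document; each statement's English description precedes it below -/
import Mathlib

section
/- For every real α and every n ∈ ℕ with n ≥ 1, the polynomial identity x² · L_{n−1}^{(α+3)}(x) = −n(x + α + 2) · L_n^{(α)}(x) + ((α + 2)(α + 1) − n·x) · L_{n−1}^{(α+1)}(x) holds in ℝ[x]. -/
/-!
The coefficient of `X ^ k` in `laguerre β n` is `(-1) ^ k / k! * choose (β + n) (n - k)`, a
generalized binomial coefficient. Pascal's rule and the absorption identity
`choose r (k + 1) * (k + 1) = choose r k * (r - k)` give two contiguous relations,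
`L_{n+1}^{(β+1)} = L_{n+1}^{(β)} + L_n^{(β+1)}` and
`x L_n^{(β+2)} = (β + 1) L_n^{(β+1)} - (n + 1) L_{n+1}^{(β)}`.
Writing `x² L_{n-1}^{(α+3)} = x · (x L_{n-1}^{(α+3)})`, the second relation (at `β = α + 1`, then
`β = α`) and the first (at `β = α`) reduce everything to `L_n^{(α)}` and `L_{n-1}^{(α+1)}`.
-/

open Polynomial

/-- The generalized Laguerre polynomial `L_n^{(α)}(x) =
∑_{k=0}^{n} (−1)^k [∏_{j=k+1}^{n}(α+j)] / ((n−k)!·k!) · x^k`. -/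
noncomputable def laguerre (α : ℝ) (n : ℕ) : Polynomial ℝ :=
  ∑ k ∈ Finset.range (n + 1),
    Polynomial.C ((-1 : ℝ) ^ k * (∏ j ∈ Finset.Icc (k + 1) n, (α + (j : ℝ))) /
      ((n - k).factorial * k.factorial)) * Polynomial.X ^ k

section
variable {K : Type*} [Field K] [CharZero K]

theorem Ring.choose_succ_right_eq (r : K) (k : ℕ) :
    Ring.choose r (k + 1) * (k + 1) = Ring.choose r k * (r - k) := by
  have h := Ring.descPochhammer_eq_factorial_smul_choose r (k + 1)
  rw [descPochhammer_succ_right, smeval_mul, Ring.descPochhammer_eq_factorial_smul_choose] at h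
  simp only [smeval_sub, smeval_X, smeval_natCast, Nat.factorial_succ, nsmul_eq_mul, pow_one,
    pow_zero, mul_one, Nat.cast_mul, Nat.cast_add, Nat.cast_one] at h
  apply mul_left_cancel₀ (Nat.cast_ne_zero.mpr k.factorial_ne_zero : (k.factorial : K) ≠ 0)
  linear_combination -h

theorem prod_Icc_add_div_factorial_eq_choose (β : K) {k n : ℕ} (hkn : k ≤ n) :
    (∏ j ∈ Finset.Icc (k + 1) n, (β + j)) / (n - k).factorial = Ring.choose (β + n) (n - k) := by
  obtain ⟨d, rfl⟩ := Nat.exists_eq_add_of_le hkn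
  induction d generalizing k with
  | zero => simp
  | succ d ih =>
    have hsplit : ∏ j ∈ Finset.Icc (k + 1) (k + (d + 1)), (β + j) =
        (β + (k + 1 : ℕ)) * ∏ j ∈ Finset.Icc (k + 1 + 1) (k + 1 + d), (β + j) := by
      rw [← Finset.Ico_add_one_right_eq_Icc, ← Finset.Ico_add_one_right_eq_Icc,
        Finset.prod_eq_prod_Ico_succ_bot (by omega), show k + (d + 1) = k + 1 + d by omega]
    have hd : (d.factorial : K) ≠ 0 := Nat.cast_ne_zero.mpr d.factorial_ne_zero
    have ih' := ih (k := k + 1) (by omega)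
    rw [Nat.add_sub_cancel_left, div_eq_iff hd] at ih'
    have habs := Ring.choose_succ_right_eq (β + (k + 1 + d : ℕ)) d
    rw [show β + ((k + 1 + d : ℕ) : K) - d = β + (k + 1 : ℕ) by push_cast; ring] at habs
    rw [Nat.add_sub_cancel_left, hsplit, ih', show k + (d + 1) = k + 1 + d by omega,
      div_eq_iff (Nat.cast_ne_zero.mpr (d + 1).factorial_ne_zero), Nat.factorial_succ]
    push_cast at habs ⊢
    linear_combination -(d.factorial : K) * habs
end

theorem coeff_laguerre (β : ℝ) (n k : ℕ) :
    (laguerre β n).coeff k =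
      if k ≤ n then (-1) ^ k / k.factorial * Ring.choose (β + n) (n - k) else 0 := by
  simp only [laguerre, finsetSum_coeff, coeff_C_mul_X_pow, Finset.sum_ite_eq,
    Finset.mem_range, Nat.lt_succ_iff]
  split_ifs with hkn
  · rw [← prod_Icc_add_div_factorial_eq_choose β hkn]
    field_simp
  · rfl

theorem laguerre_add_one_succ (β : ℝ) (n : ℕ) :
    laguerre (β + 1) (n + 1) = laguerre β (n + 1) + laguerre (β + 1) n := by
  ext k
  simp only [coeff_add, coeff_laguerre]
  obtain hk | rfl | hk : k ≤ n ∨ k = n + 1 ∨ n + 1 < k := by omega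
  · obtain ⟨j, rfl⟩ := Nat.exists_eq_add_of_le hk
    have hpascal : Ring.choose (β + 1 + (k + j + 1 : ℕ)) (j + 1) =
        Ring.choose (β + (k + j + 1 : ℕ)) (j + 1) + Ring.choose (β + 1 + (k + j : ℕ)) j := by
      rw [show β + 1 + ((k + j + 1 : ℕ) : ℝ) = β + (k + j + 1 : ℕ) + 1 by push_cast; ring,
        show β + 1 + ((k + j : ℕ) : ℝ) = β + (k + j + 1 : ℕ) by push_cast; ring,
        Ring.choose_succ_succ, add_comm]
    rw [if_pos (by omega), if_pos (by omega), if_pos hk, show k + j + 1 - k = j + 1 by omega,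
      Nat.add_sub_cancel_left, hpascal]
    ring
  · simp
  · simp [show ¬k ≤ n + 1 by omega, show ¬k ≤ n by omega]

theorem X_mul_laguerre_add_two (β : ℝ) (n : ℕ) :
    X * laguerre (β + 2) n =
      C (β + 1) * laguerre (β + 1) n - C ((n : ℝ) + 1) * laguerre β (n + 1) := by
  ext k
  simp only [coeff_sub, coeff_C_mul]
  rcases k with _ | k
  · have habs : Ring.choose (β + (n + 1 : ℕ)) (n + 1) * (n + 1) =
        Ring.choose (β + 1 + n) n * (β + 1) := by
      rw [Ring.choose_succ_right_eq, show β + ((n + 1 : ℕ) : ℝ) = β + 1 + n by push_cast; ring]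
      ring
    simp only [coeff_X_mul_zero, coeff_laguerre, if_pos (Nat.zero_le _), Nat.sub_zero,
      pow_zero, Nat.factorial_zero, Nat.cast_one, div_one, one_mul]
    linear_combination habs
  · rw [coeff_X_mul]
    simp only [coeff_laguerre]
    obtain hk | rfl | hk : k + 1 ≤ n ∨ k = n ∨ n < k := by omega
    · obtain ⟨j, rfl⟩ : ∃ j, n = k + j + 1 := ⟨n - (k + 1), by omega⟩
      set r : ℝ := β + (k + j + 1 + 1 : ℕ)
      have hpascal := Ring.choose_succ_succ r j
      have habs : Ring.choose r (j + 1) = Ring.choose r j * (β + k + 2) / (j + 1) := by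
        rw [eq_div_iff (by positivity), Ring.choose_succ_right_eq]
        push_cast [r]
        ring
      rw [if_pos (by omega), if_pos (by omega), if_pos (by omega),
        show k + j + 1 - k = j + 1 by omega, show k + j + 1 - (k + 1) = j by omega,
        show k + j + 1 + 1 - (k + 1) = j + 1 by omega,
        show β + 2 + ((k + j + 1 : ℕ) : ℝ) = r + 1 by push_cast [r]; ring,
        show β + 1 + ((k + j + 1 : ℕ) : ℝ) = r by push_cast [r]; ring,
        hpascal, habs, pow_succ, Nat.factorial_succ]
      push_cast
      field_simp
      ring
    · rw [if_pos le_rfl, if_neg (by omega), if_pos le_rfl, Nat.sub_self, Nat.sub_self,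
        Ring.choose_zero_right, Ring.choose_zero_right, pow_succ, Nat.factorial_succ]
      push_cast
      field_simp
      ring
    · simp [show ¬k ≤ n by omega, show ¬k + 1 ≤ n by omega, show ¬k + 1 ≤ n + 1 by omega]

theorem laguerre_mixed_recurrence_deg_pred_param_three (α : ℝ) (n : ℕ) (hn : 1 ≤ n) :
    Polynomial.X ^ 2 * laguerre (α + 3) (n - 1) =
      -(Polynomial.C (n : ℝ)) * (Polynomial.X + Polynomial.C (α + 2)) * laguerre α n +
        (Polynomial.C ((α + 2) * (α + 1)) - Polynomial.C (n : ℝ) * Polynomial.X) *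
          laguerre (α + 1) (n - 1) := by
  obtain ⟨m, rfl⟩ := Nat.exists_eq_add_of_le' hn
  have hX₃ := X_mul_laguerre_add_two (α + 1) m
  have hX₂ := X_mul_laguerre_add_two α m
  have hshift := laguerre_add_one_succ α m
  rw [show α + 1 + 2 = α + 3 by ring, show α + 1 + 1 = α + 2 by ring] at hX₃
  rw [Nat.add_sub_cancel, Nat.cast_add_one]
  linear_combination (norm := skip) X * hX₃ + C (α + 2) * hX₂ - C ((m : ℝ) + 1) * X * hshift
  simp only [map_mul, map_add, map_one]
  ring
end

section
/- Let α > −1 and n ∈ ℕ with n ≥ 4, and suppose L_{n−1}^{(α+4)} and L_n^{(α)} have no common zeros. Let 0 < x_1 < ⋯ < x_n be the zeros of L_n^{(α)}. Then at least n − 2 of the n − 1 open intervals (x_1, x_2), (x_2, x_3), …, (x_{n−1}, x_n) contain exactly one zero of L_{n−1}^{(α+4)}. -/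
/-!
At a zero `t` of `L_n^{(α)}`, the contiguous relations of the Laguerre polynomials give
`t³ L_{n-1}^{(α+4)}(t) = -q(t) (L_n^{(α)})'(t)` with the quadratic
`q(t) = (α+1)(α+2)(α+3) - 2n(α+2)t - nt²`. The derivative alternates in sign along
`x_1 < ⋯ < x_n`, while `q` is decreasing on `[0, ∞)` and so changes sign at most once there.
Hence `L_{n-1}^{(α+4)}` changes sign on all but at most one of the `n - 1` intervals
`(x_i, x_{i+1})`. Each such interval contains an odd number of zeros counted with multiplicity,
and since `L_{n-1}^{(α+4)}` has only `n - 1` zeros, it contains exactly one.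
-/

open Polynomial

theorem Multiset.neg_one_pow_card_filter_neg_mul_prod_pos (s : Multiset ℝ) (hs : ∀ r ∈ s, r ≠ 0) :
    0 < (-1 : ℝ) ^ Multiset.card (s.filter (· < 0)) * s.prod := by
  induction s using Multiset.induction with
  | empty => simp
  | cons r s ih =>
    have hr := hs r (Multiset.mem_cons_self r s)
    have ih := ih fun r hr => hs r (Multiset.mem_cons_of_mem hr)
    rw [Multiset.prod_cons]
    rcases hr.lt_or_gt with hr | hr
    · rw [Multiset.filter_cons_of_pos (p := (· < 0)) s hr, Multiset.card_cons, pow_succ]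
      nlinarith
    · rw [Multiset.filter_cons_of_neg (p := (· < 0)) s hr.not_gt]
      nlinarith

theorem Polynomial.eval_mul_eval_pos_of_forall_eval_ne_zero {h : ℝ[X]} (hh : ∀ t, h.eval t ≠ 0)
    (a b : ℝ) : 0 < h.eval a * h.eval b := by
  have hcont : Continuous fun t => h.eval t := h.continuous
  by_contra! hab
  rcases mul_nonpos_iff.mp hab with ⟨ha, hb⟩ | ⟨ha, hb⟩
  · obtain ⟨t, ht⟩ := intermediate_value_univ₂ (a := b) (b := a) hcont continuous_const hb ha
    exact hh t ht
  · obtain ⟨t, ht⟩ := intermediate_value_univ₂ (a := a) (b := b) hcont continuous_const ha hb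
    exact hh t ht

theorem Polynomial.neg_one_pow_card_roots_filter_Ioo_mul_pos {g : ℝ[X]} {a b : ℝ} (hab : a ≤ b)
    (ha : g.eval a ≠ 0) (hb : g.eval b ≠ 0) :
    0 < (-1 : ℝ) ^ Multiset.card (g.roots.filter (· ∈ Set.Ioo a b)) * (g.eval a * g.eval b) := by
  obtain ⟨h, hgh, -, hroots⟩ := g.exists_prod_multiset_X_sub_C_mul
  have hh : ∀ t, h.eval t ≠ 0 := fun t ht => by
    have h0 : h ≠ 0 := by
      rintro rfl
      rw [mul_zero] at hgh
      simp [← hgh] at ha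
    simpa [hroots] using (mem_roots h0).mpr ht
  have heval : g.eval a * g.eval b =
      (g.roots.map fun r => (a - r) * (b - r)).prod * (h.eval a * h.eval b) := by
    have hg : ∀ t, g.eval t = (g.roots.map (t - ·)).prod * h.eval t := fun t => by
      conv_lhs => rw [← hgh]
      simp [eval_multiset_prod]
    rw [hg, hg, Multiset.prod_map_mul]
    ring
  have hfilter : Multiset.card ((g.roots.map fun r => (a - r) * (b - r)).filter (· < 0)) =
      Multiset.card (g.roots.filter (· ∈ Set.Ioo a b)) := by
    rw [Multiset.filter_map, Multiset.card_map]
    congr 1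
    refine Multiset.filter_congr fun r _ => ?_
    simp only [Function.comp_apply, Set.mem_Ioo, mul_neg_iff, sub_pos, sub_neg]
    exact or_iff_right fun ⟨h1, h2⟩ => by linarith
  have hne : ∀ r ∈ g.roots, (a - r) * (b - r) ≠ 0 := fun r hr => by
    have hr := isRoot_of_mem_roots hr
    exact mul_ne_zero (sub_ne_zero.mpr fun h => ha (h ▸ hr)) (sub_ne_zero.mpr fun h => hb (h ▸ hr))
  have hprod := Multiset.neg_one_pow_card_filter_neg_mul_prod_pos _
    (Multiset.forall_mem_map_iff.mpr hne)
  rw [hfilter] at hprod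
  rw [heval, ← mul_assoc]
  exact mul_pos hprod (eval_mul_eval_pos_of_forall_eval_ne_zero hh a b)

theorem Multiset.sum_card_filter_le_card {ι α : Type*} (M : Multiset α) (S : Finset ι)
    (I : ι → Set α) [∀ i, DecidablePred (· ∈ I i)] (hI : (S : Set ι).PairwiseDisjoint I) :
    ∑ i ∈ S, card (M.filter (· ∈ I i)) ≤ card M := by
  induction S using Finset.cons_induction generalizing M with
  | empty => simp
  | cons i S hi ih =>
    have hrest : ∀ j ∈ S, M.filter (· ∈ I j) = (M.filter (· ∉ I i)).filter (· ∈ I j) := by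
      intro j hj
      rw [Multiset.filter_filter]
      refine Multiset.filter_congr fun t _ => ⟨fun htj => ⟨htj, fun hti => ?_⟩, And.left⟩
      have := hI.elim_set (by simp [hj]) (by simp) t htj hti
      exact hi (this ▸ hj)
    calc ∑ j ∈ Finset.cons i S hi, card (M.filter (· ∈ I j))
        = card (M.filter (· ∈ I i)) + ∑ j ∈ S, card ((M.filter (· ∉ I i)).filter (· ∈ I j)) := by
          rw [Finset.sum_cons]
          exact congrArg _ (Finset.sum_congr rfl fun j hj => by rw [← hrest j hj])
      _ ≤ card (M.filter (· ∈ I i)) + card (M.filter (· ∉ I i)) :=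
          Nat.add_le_add_left (ih _ (hI.subset (by simp))) _
      _ = card M := by rw [← card_add, filter_add_not]

theorem Polynomial.existsUnique_root_mem_Ioo_of_sign_changes {ι : Type*} {g : ℝ[X]}
    {S : Finset ι} {a b : ι → ℝ} (hab : ∀ i ∈ S, a i ≤ b i)
    (hdisj : (S : Set ι).PairwiseDisjoint fun i => Set.Ioo (a i) (b i))
    (hsign : ∀ i ∈ S, g.eval (a i) * g.eval (b i) < 0) (hdeg : g.natDegree ≤ S.card + 1) :
    ∀ i ∈ S, ∃! t, t ∈ Set.Ioo (a i) (b i) ∧ g.eval t = 0 := by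
  set c : ι → ℕ := fun j => Multiset.card (g.roots.filter (· ∈ Set.Ioo (a j) (b j)))
  have hodd : ∀ j ∈ S, Odd (c j) := by
    intro j hj
    have hpos := neg_one_pow_card_roots_filter_Ioo_mul_pos (hab j hj)
      (left_ne_zero_of_mul (hsign j hj).ne) (right_ne_zero_of_mul (hsign j hj).ne)
    refine (Nat.even_or_odd (c j)).resolve_left fun heven => ?_
    rw [heven.neg_one_pow, one_mul] at hpos
    exact (hsign j hj).not_gt hpos
  have hsum : ∑ j ∈ S, c j ≤ S.card + 1 :=
    ((Multiset.sum_card_filter_le_card _ S _ hdisj).trans g.card_roots').trans hdeg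
  intro i hi
  have hci : c i = 1 := by
    classical
    by_contra hne
    have h3 : 3 ≤ c i := by obtain ⟨k, hk⟩ := hodd i hi; omega
    have hrest : (S.erase i).card ≤ ∑ j ∈ S.erase i, c j := by
      simpa using Finset.card_nsmul_le_sum (S.erase i) c 1
        fun j hj => (hodd j (Finset.mem_of_mem_erase hj)).pos
    have := Finset.add_sum_erase S c hi
    have := Finset.card_erase_add_one hi
    omega
  obtain ⟨r, hr⟩ := Multiset.card_eq_one.mp hci
  have hg : g ≠ 0 := fun hg => by simpa [hg] using hsign i hi
  have hmem : ∀ t, t ∈ Set.Ioo (a i) (b i) ∧ g.eval t = 0 ↔ t = r := fun t => by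
    rw [← Multiset.mem_singleton (a := r) (b := t), ← hr, Multiset.mem_filter, mem_roots hg,
      IsRoot.def, and_comm]
  exact ⟨r, (hmem r).2 rfl, fun t ht => (hmem t).1 ht⟩

theorem Polynomial.eq_C_leadingCoeff_mul_nodal {F ι : Type*} [Field F] {p : F[X]}
    {s : Finset ι} {v : ι → F} (hv : Set.InjOn v s) (hdeg : p.natDegree = s.card)
    (hroot : ∀ i ∈ s, p.eval (v i) = 0) : p = C p.leadingCoeff * Lagrange.nodal s v := by
  rcases eq_or_ne p 0 with rfl | hp
  · simp
  have hlc : p.leadingCoeff ≠ 0 := leadingCoeff_ne_zero.mpr hp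
  refine eq_of_degree_le_of_eval_index_eq s hv ?_ ?_ ?_ fun i hi => ?_
  · rw [degree_eq_natDegree hp, hdeg]
  · rw [degree_C_mul hlc, Lagrange.degree_nodal, degree_eq_natDegree hp, hdeg]
  · rw [leadingCoeff_mul, leadingCoeff_C, (Lagrange.nodal_monic).leadingCoeff, mul_one]
  · rw [hroot i hi, eval_mul, Lagrange.eval_nodal_at_node hi, mul_zero]

theorem Polynomial.eval_derivative_eq_leadingCoeff_mul_prod_erase {F ι : Type*} [Field F]
    [DecidableEq ι] {p : F[X]} {s : Finset ι} {v : ι → F} (hv : Set.InjOn v s)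
    (hdeg : p.natDegree = s.card) (hroot : ∀ i ∈ s, p.eval (v i) = 0) {i : ι} (hi : i ∈ s) :
    (derivative p).eval (v i) = p.leadingCoeff * ∏ j ∈ s.erase i, (v i - v j) := by
  conv_lhs => rw [eq_C_leadingCoeff_mul_nodal hv hdeg hroot]
  rw [derivative_C_mul, eval_mul, eval_C, Lagrange.eval_nodal_derivative_eval_node_eq hi,
    Lagrange.eval_nodal]

theorem Polynomial.coeff_X_mul_derivative {R : Type*} [Semiring R] (p : R[X]) (k : ℕ) :
    (X * derivative p).coeff k = k * p.coeff k := by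
  cases k with
  | zero => simp
  | succ k => rw [coeff_X_mul, coeff_derivative, Nat.cast_comm]; push_cast; rfl

theorem StrictMonoOn.neg_one_pow_mul_prod_erase_sub_pos {x : ℕ → ℝ} {n : ℕ}
    (hx : StrictMonoOn x (Set.Icc 1 n)) {i : ℕ} (hi : i ∈ Finset.Icc 1 n) :
    0 < (-1 : ℝ) ^ (n - i) * ∏ j ∈ (Finset.Icc 1 n).erase i, (x i - x j) := by
  have hi' := Finset.mem_Icc.mp hi
  have hsplit : (Finset.Icc 1 n).erase i = Finset.Ico 1 i ∪ Finset.Ioc i n := by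
    ext j; simp only [Finset.mem_erase, Finset.mem_Icc, Finset.mem_union, Finset.mem_Ico,
      Finset.mem_Ioc]; omega
  have hdisj : Disjoint (Finset.Ico 1 i) (Finset.Ioc i n) :=
    Finset.disjoint_left.mpr fun j h1 h2 => by
      simp only [Finset.mem_Ico, Finset.mem_Ioc] at h1 h2; omega
  have hlow : 0 < ∏ j ∈ Finset.Ico 1 i, (x i - x j) := Finset.prod_pos fun j hj => by
    rw [Finset.mem_Ico] at hj
    exact sub_pos.mpr (hx ⟨hj.1, by omega⟩ ⟨hi'.1, hi'.2⟩ hj.2)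
  have hhigh : 0 < ∏ j ∈ Finset.Ioc i n, (x j - x i) := Finset.prod_pos fun j hj => by
    rw [Finset.mem_Ioc] at hj
    exact sub_pos.mpr (hx ⟨hi'.1, hi'.2⟩ ⟨by omega, hj.2⟩ hj.1)
  have hneg : ∏ j ∈ Finset.Ioc i n, (x i - x j) =
      (-1) ^ (n - i) * ∏ j ∈ Finset.Ioc i n, (x j - x i) := by
    rw [← Nat.card_Ioc i n, ← Finset.prod_neg]
    simp
  have hsq : ((-1 : ℝ) ^ (n - i)) ^ 2 = 1 := by rw [← pow_mul, mul_comm, pow_mul]; norm_num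
  rw [hsplit, Finset.prod_union hdisj, hneg]
  calc 0 < (∏ j ∈ Finset.Ico 1 i, (x i - x j)) * ∏ j ∈ Finset.Ioc i n, (x j - x i) :=
        mul_pos hlow hhigh
    _ = _ := by linear_combination (-(∏ j ∈ Finset.Ico 1 i, (x i - x j)) *
        ∏ j ∈ Finset.Ioc i n, (x j - x i)) * hsq

theorem MonotoneOn.pairwiseDisjoint_Ioo_succ {x : ℕ → ℝ} {m : ℕ}
    (hx : MonotoneOn x (Set.Icc 1 (m + 1))) :
    ((Finset.Icc 1 m : Finset ℕ) : Set ℕ).PairwiseDisjoint fun i => Set.Ioo (x i) (x (i + 1)) := by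
  have key : ∀ i ∈ Finset.Icc 1 m, ∀ j ∈ Finset.Icc 1 m, i < j →
      Disjoint (Set.Ioo (x i) (x (i + 1))) (Set.Ioo (x j) (x (j + 1))) := by
    intro i hi j hj hij
    rw [Finset.mem_Icc] at hi hj
    have hle : x (i + 1) ≤ x j := hx ⟨by omega, by omega⟩ ⟨hj.1, by omega⟩ hij
    exact Set.disjoint_left.mpr fun t hti htj => (hti.2.trans_le hle).not_gt htj.1
  intro i hi j hj hij
  rcases hij.lt_or_gt with h | h
  · exact key i hi j hj h
  · exact (key j hj i hi h).symm

theorem AntitoneOn.card_filter_mul_succ_neg_le_one {y : ℕ → ℝ} {m : ℕ}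
    (hy : AntitoneOn y (Set.Icc 1 (m + 1))) :
    ((Finset.Icc 1 m).filter fun i => y i * y (i + 1) < 0).card ≤ 1 := by
  have key : ∀ i j, 1 ≤ i → i < j → j ≤ m → y i * y (i + 1) < 0 → 0 ≤ y j * y (j + 1) := by
    intro i j hi hij hjm hyi
    have h1 : y (i + 1) ≤ y i := hy ⟨hi, by omega⟩ ⟨by omega, by omega⟩ (by omega)
    have h2 : y j ≤ y (i + 1) := hy ⟨by omega, by omega⟩ ⟨by omega, by omega⟩ hij
    have h3 : y (j + 1) ≤ y j := hy ⟨by omega, by omega⟩ ⟨by omega, by omega⟩ (by omega)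
    have hneg : y (i + 1) < 0 := by
      by_contra! h
      exact hyi.not_ge (mul_nonneg (h.trans h1) h)
    nlinarith
  refine Finset.card_le_one.mpr fun i hi j hj => ?_
  simp only [Finset.mem_filter, Finset.mem_Icc] at hi hj
  rcases lt_trichotomy i j with h | h | h
  · exact absurd (key i j hi.1.1 h hj.1.2 hi.2) hj.2.not_ge
  · exact h
  · exact absurd (key j i hj.1.1 h hi.1.2 hj.2) hi.2.not_ge

theorem le_card_filter_mul_succ_neg_of_alternating {y v : ℕ → ℝ} {m : ℕ}
    (hy : AntitoneOn y (Set.Icc 1 (m + 1)))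
    (halt : ∀ i ∈ Finset.Icc 1 (m + 1), (-1 : ℝ) ^ i * (y i * v i) < 0) :
    m - 1 ≤ ((Finset.Icc 1 m).filter fun i => v i * v (i + 1) < 0).card := by
  have hsub : (Finset.Icc 1 m).filter (fun i => ¬ v i * v (i + 1) < 0) ⊆
      (Finset.Icc 1 m).filter fun i => y i * y (i + 1) < 0 := by
    intro i hi
    simp only [Finset.mem_filter, Finset.mem_Icc, not_lt] at hi ⊢
    obtain ⟨⟨hi1, him⟩, hv⟩ := hi
    have ha := halt i (Finset.mem_Icc.mpr ⟨hi1, by omega⟩)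
    have hb := halt (i + 1) (Finset.mem_Icc.mpr ⟨by omega, by omega⟩)
    have hsq : ((-1 : ℝ) ^ i) ^ 2 = 1 := by rw [← pow_mul, mul_comm, pow_mul]; norm_num
    have hprod : y i * y (i + 1) * (v i * v (i + 1)) < 0 := by
      have := mul_pos_of_neg_of_neg ha hb
      rw [pow_succ] at this
      linear_combination this - (y i * v i * (y (i + 1) * v (i + 1))) * hsq
    exact ⟨⟨hi1, him⟩, neg_of_mul_neg_left hprod hv⟩
  have hT := (Finset.card_le_card hsub).trans hy.card_filter_mul_succ_neg_le_one
  have hsplit := Finset.card_filter_add_card_filter_not (s := Finset.Icc 1 m)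
    (p := fun i => v i * v (i + 1) < 0)
  rw [Nat.card_Icc] at hsplit
  omega

theorem laguerre_coeff (α : ℝ) {n k : ℕ} (hk : k ≤ n) :
    (laguerre α n).coeff k =
      (-1 : ℝ) ^ k * (∏ j ∈ Finset.Icc (k + 1) n, (α + (j : ℝ))) /
        ((n - k).factorial * k.factorial) := by
  simp only [laguerre, finsetSum_coeff, coeff_C_mul_X_pow]
  rw [Finset.sum_eq_single k (fun j _ hj => if_neg hj.symm) (fun h => absurd
    (Finset.mem_range.mpr (Nat.lt_succ_of_le hk)) h), if_pos rfl]

theorem laguerre_coeff_of_lt (α : ℝ) {n k : ℕ} (hk : n < k) : (laguerre α n).coeff k = 0 := by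
  simp only [laguerre, finsetSum_coeff, coeff_C_mul_X_pow]
  exact Finset.sum_eq_zero fun j hj => if_neg fun h => by
    rw [Finset.mem_range] at hj; omega

theorem laguerre_coeff_self (α : ℝ) (n : ℕ) :
    (laguerre α n).coeff n = (-1 : ℝ) ^ n / n.factorial := by
  simp [laguerre_coeff α le_rfl]

theorem natDegree_laguerre (α : ℝ) (n : ℕ) : (laguerre α n).natDegree = n :=
  le_antisymm (natDegree_le_iff_coeff_eq_zero.mpr fun _ hk => laguerre_coeff_of_lt α hk)
    (le_natDegree_of_ne_zero (by rw [laguerre_coeff_self]; positivity))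

theorem leadingCoeff_laguerre (α : ℝ) (n : ℕ) :
    (laguerre α n).leadingCoeff = (-1 : ℝ) ^ n / n.factorial := by
  rw [leadingCoeff, natDegree_laguerre, laguerre_coeff_self]

theorem prod_Icc_add_one_add_natCast (α : ℝ) (a b : ℕ) :
    ∏ j ∈ Finset.Icc a b, (α + 1 + (j : ℝ)) = ∏ j ∈ Finset.Icc (a + 1) (b + 1), (α + (j : ℝ)) := by
  rw [← Finset.map_add_right_Icc a b 1, Finset.prod_map]
  exact Finset.prod_congr rfl fun j _ => by simp only [addRightEmbedding_apply]; push_cast; ring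

theorem laguerre_succ_eq_sub (α : ℝ) (n : ℕ) :
    laguerre α (n + 1) = laguerre (α + 1) (n + 1) - laguerre (α + 1) n := by
  ext k
  rw [coeff_sub]
  rcases lt_trichotomy (n + 1) k with hk | rfl | hk
  · simp [laguerre_coeff_of_lt _ hk, laguerre_coeff_of_lt _ (n.lt_succ_self.trans hk)]
  · simp [laguerre_coeff_of_lt _ n.lt_succ_self, laguerre_coeff _ le_rfl]
  have hkn : k ≤ n := Nat.le_of_lt_succ hk
  rw [laguerre_coeff _ hk.le, laguerre_coeff _ hk.le, laguerre_coeff _ hkn,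
    prod_Icc_add_one_add_natCast, prod_Icc_add_one_add_natCast,
    Finset.prod_Icc_succ_top (by omega : k + 1 + 1 ≤ n + 1 + 1),
    ← Finset.insert_Icc_add_one_left_eq_Icc (by omega : k + 1 ≤ n + 1),
    Finset.prod_insert (by simp), show n + 1 - k = n - k + 1 by omega, Nat.factorial_succ]
  have : (k.factorial : ℝ) ≠ 0 := by positivity
  have : ((n - k).factorial : ℝ) ≠ 0 := by positivity
  have : ((n - k : ℕ) : ℝ) + 1 ≠ 0 := by positivity
  push_cast [Nat.cast_sub hkn] at *
  field_simp
  ring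

theorem derivative_laguerre_succ (α : ℝ) (n : ℕ) :
    derivative (laguerre α (n + 1)) = -laguerre (α + 1) n := by
  ext k
  rw [coeff_derivative, coeff_neg]
  rcases lt_or_ge n k with hk | hk
  · rw [laguerre_coeff_of_lt _ hk, laguerre_coeff_of_lt _ (by omega)]
    ring
  rw [laguerre_coeff _ hk, laguerre_coeff _ (by omega), prod_Icc_add_one_add_natCast,
    show n + 1 - (k + 1) = n - k by omega, Nat.factorial_succ]
  have : (k.factorial : ℝ) ≠ 0 := by positivity
  have : ((n - k).factorial : ℝ) ≠ 0 := by positivity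
  push_cast
  field_simp
  ring

theorem X_mul_derivative_laguerre_succ (α : ℝ) (n : ℕ) :
    X * derivative (laguerre α (n + 1)) =
      C ((n : ℝ) + 1) * laguerre α (n + 1) - C ((n : ℝ) + 1 + α) * laguerre α n := by
  ext k
  rw [coeff_X_mul_derivative, coeff_sub, coeff_C_mul, coeff_C_mul]
  rcases lt_trichotomy (n + 1) k with hk | rfl | hk
  · simp [laguerre_coeff_of_lt _ hk, laguerre_coeff_of_lt _ (n.lt_succ_self.trans hk)]
  · simp [laguerre_coeff_of_lt _ n.lt_succ_self]
  have hkn : k ≤ n := Nat.le_of_lt_succ hk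
  rw [laguerre_coeff _ hk.le, laguerre_coeff _ hkn, Finset.prod_Icc_succ_top (by omega),
    show n + 1 - k = n - k + 1 by omega, Nat.factorial_succ]
  have : (k.factorial : ℝ) ≠ 0 := by positivity
  have : ((n - k).factorial : ℝ) ≠ 0 := by positivity
  have : ((n - k : ℕ) : ℝ) + 1 ≠ 0 := by positivity
  push_cast [Nat.cast_sub hkn] at *
  field_simp
  ring

theorem eval_laguerre_succ (α : ℝ) (n : ℕ) (t : ℝ) :
    (laguerre α (n + 1)).eval t =
      (laguerre (α + 1) (n + 1)).eval t - (laguerre (α + 1) n).eval t := by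
  rw [laguerre_succ_eq_sub, eval_sub]

theorem mul_eval_laguerre_add_one (α : ℝ) (n : ℕ) (t : ℝ) :
    t * (laguerre (α + 1) n).eval t =
      ((n : ℝ) + 1 + α) * (laguerre α n).eval t - ((n : ℝ) + 1) * (laguerre α (n + 1)).eval t := by
  have h := congrArg (eval t) (X_mul_derivative_laguerre_succ α n)
  simp only [eval_mul, eval_X, eval_sub, eval_C, derivative_laguerre_succ, eval_neg] at h
  linear_combination -h

noncomputable def laguerreQuad (α : ℝ) (n : ℕ) (t : ℝ) : ℝ :=
  (α + 1) * (α + 2) * (α + 3) - 2 * n * (α + 2) * t - n * t ^ 2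

theorem pow_four_mul_eval_laguerre_add_four_of_eval_eq_zero (α : ℝ) (m : ℕ) {t : ℝ}
    (ht : (laguerre α (m + 1)).eval t = 0) :
    t ^ 4 * (laguerre (α + 4) m).eval t =
      -(t * laguerreQuad α (m + 1) t * (derivative (laguerre α (m + 1))).eval t) := by
  set n : ℝ := (m : ℝ) + 1
  have h1 := mul_eval_laguerre_add_one α m t
  have h2 := mul_eval_laguerre_add_one (α + 1) m t
  have h3 := mul_eval_laguerre_add_one (α + 2) m t
  have h4 := mul_eval_laguerre_add_one (α + 3) m t
  have r0 := eval_laguerre_succ α m t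
  have r1 := eval_laguerre_succ (α + 1) m t
  have r2 := eval_laguerre_succ (α + 2) m t
  rw [show α + 1 + 1 = α + 2 by ring] at h2 r1
  rw [show α + 2 + 1 = α + 3 by ring] at h3 r2
  rw [show α + 3 + 1 = α + 4 by ring] at h4
  rw [ht] at h1 r0
  -- Raising the parameter one step at a time, each `t ^ k * L_m^{(α+k)}(t)` is a multiple of
  -- `L_m^{(α)}(t)`, because the terms in `L_{m+1}^{(α)}(t)` vanish.
  have s2 : t ^ 2 * (laguerre (α + 2) m).eval t = (α + 1) * (n + α) * (laguerre α m).eval t := by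
    linear_combination t * h2 + (α + 1) * h1 + n * t * r0
  have s3 : t ^ 3 * (laguerre (α + 3) m).eval t =
      (n + α) * ((α + 1) * (α + 2) - n * t) * (laguerre α m).eval t := by
    linear_combination t ^ 2 * h3 + n * t ^ 2 * r1 + n * t ^ 2 * r0 + (α + 2) * s2 - n * t * h1
  have s4 : t ^ 4 * (laguerre (α + 4) m).eval t =
      (n + α) * laguerreQuad α (m + 1) t * (laguerre α m).eval t := by
    unfold laguerreQuad
    push_cast
    linear_combination t ^ 3 * h4 + n * t ^ 3 * r2 + n * t ^ 3 * r1 + n * t ^ 3 * r0 + (α + 3) * s3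
      - n * t * s2 - n * t ^ 2 * h1
  have hD : (derivative (laguerre α (m + 1))).eval t = -(laguerre (α + 1) m).eval t := by
    rw [derivative_laguerre_succ, eval_neg]
  rw [hD]
  linear_combination s4 - laguerreQuad α (m + 1) t * h1

theorem antitoneOn_laguerreQuad {α : ℝ} (hα : -2 ≤ α) (n : ℕ) :
    AntitoneOn (laguerreQuad α n) (Set.Ici 0) := by
  intro s hs t ht hst
  have hs : 0 ≤ s := hs
  unfold laguerreQuad
  have hn : (0 : ℝ) ≤ n := n.cast_nonneg
  nlinarith [mul_nonneg (mul_nonneg hn (by linarith : 0 ≤ α + 2)) (sub_nonneg.mpr hst),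
    mul_nonneg hn (mul_nonneg (by linarith : 0 ≤ s + t) (sub_nonneg.mpr hst))]

theorem neg_one_pow_mul_eval_derivative_laguerre_pos (α : ℝ) {n : ℕ} {x : ℕ → ℝ}
    (hx : StrictMonoOn x (Set.Icc 1 n))
    (hroot : ∀ i ∈ Finset.Icc 1 n, (laguerre α n).eval (x i) = 0) {i : ℕ}
    (hi : i ∈ Finset.Icc 1 n) :
    0 < (-1 : ℝ) ^ i * (derivative (laguerre α n)).eval (x i) := by
  have hinj : Set.InjOn x (Finset.Icc 1 n : Finset ℕ) := by rw [Finset.coe_Icc]; exact hx.injOn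
  rw [eval_derivative_eq_leadingCoeff_mul_prod_erase hinj (by simp [natDegree_laguerre]) hroot hi,
    leadingCoeff_laguerre]
  have hpow : (-1 : ℝ) ^ i * (-1) ^ n = (-1) ^ (n - i) := by
    rw [← pow_add, show i + n = n - i + 2 * i by have := (Finset.mem_Icc.mp hi).2; omega, pow_add,
      pow_mul]
    norm_num
  calc 0 < (-1 : ℝ) ^ (n - i) * (∏ j ∈ (Finset.Icc 1 n).erase i, (x i - x j)) / n.factorial :=
        div_pos (hx.neg_one_pow_mul_prod_erase_sub_pos hi) (by positivity)
    _ = _ := by rw [← hpow]; ring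

theorem neg_one_pow_mul_laguerreQuad_mul_eval_laguerre_add_four_neg (α : ℝ) {m : ℕ} {x : ℕ → ℝ}
    (hx : StrictMonoOn x (Set.Icc 1 (m + 1)))
    (hroot : ∀ i ∈ Finset.Icc 1 (m + 1), (laguerre α (m + 1)).eval (x i) = 0)
    {i : ℕ} (hi : i ∈ Finset.Icc 1 (m + 1)) (hxi : 0 < x i)
    (hg : (laguerre (α + 4) m).eval (x i) ≠ 0) :
    (-1 : ℝ) ^ i * (laguerreQuad α (m + 1) (x i) * (laguerre (α + 4) m).eval (x i)) < 0 := by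
  have hD := neg_one_pow_mul_eval_derivative_laguerre_pos α hx hroot hi
  have key := pow_four_mul_eval_laguerre_add_four_of_eval_eq_zero α m (hroot i hi)
  set q := laguerreQuad α (m + 1) (x i)
  set D := (derivative (laguerre α (m + 1))).eval (x i)
  have hq : q ≠ 0 := fun hq => hg <| by
    rw [hq, mul_zero, zero_mul, neg_zero] at key
    exact (mul_eq_zero.mp key).resolve_left (by positivity)
  have hmul : x i ^ 4 * ((-1 : ℝ) ^ i * (q * (laguerre (α + 4) m).eval (x i))) =
      -(x i * q ^ 2 * ((-1 : ℝ) ^ i * D)) := by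
    linear_combination (-1 : ℝ) ^ i * q * key
  refine neg_of_mul_neg_right (a := x i ^ 4) ?_ (by positivity)
  rw [hmul, neg_lt_zero]
  exact mul_pos (mul_pos hxi (by positivity)) hD

theorem laguerre_partial_interlacing_deg_pred_param_four_general
    (α : ℝ) (hα : -1 < α) (n : ℕ)
    (hnc : ∀ t : ℝ, ¬((laguerre (α + 4) (n - 1)).eval t = 0 ∧ (laguerre α n).eval t = 0))
    (x : ℕ → ℝ)
    (hxpos : ∀ i ∈ Finset.Icc 1 n, 0 < x i)
    (hxmono : ∀ i ∈ Finset.Icc 1 n, ∀ j ∈ Finset.Icc 1 n, i < j → x i < x j)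
    (hxroots : ∀ t : ℝ, (laguerre α n).eval t = 0 ↔ ∃ i ∈ Finset.Icc 1 n, x i = t) :
    ∃ S : Finset ℕ, S ⊆ Finset.Icc 1 (n - 1) ∧ n - 2 ≤ S.card ∧
      ∀ i ∈ S, ∃! t : ℝ, t ∈ Set.Ioo (x i) (x (i + 1)) ∧
        (laguerre (α + 4) (n - 1)).eval t = 0 := by
  rcases n with _ | m
  · exact ⟨∅, by simp⟩
  rw [Nat.add_sub_cancel] at hnc ⊢
  rw [show m + 1 - 2 = m - 1 by omega]
  have hx : StrictMonoOn x (Set.Icc 1 (m + 1)) := fun i hi j hj =>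
    hxmono i (Finset.mem_Icc.mpr hi) j (Finset.mem_Icc.mpr hj)
  have hroot : ∀ i ∈ Finset.Icc 1 (m + 1), (laguerre α (m + 1)).eval (x i) = 0 :=
    fun i hi => (hxroots _).mpr ⟨i, hi, rfl⟩
  have halt : ∀ i ∈ Finset.Icc 1 (m + 1), (-1 : ℝ) ^ i *
      (laguerreQuad α (m + 1) (x i) * (laguerre (α + 4) m).eval (x i)) < 0 := fun i hi =>
    neg_one_pow_mul_laguerreQuad_mul_eval_laguerre_add_four_neg α hx hroot hi (hxpos i hi)
      fun hg => hnc _ ⟨hg, hroot i hi⟩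
  have hq : AntitoneOn (fun i => laguerreQuad α (m + 1) (x i)) (Set.Icc 1 (m + 1)) :=
    fun i hi j hj hij => antitoneOn_laguerreQuad (by linarith) _
      (hxpos i (Finset.mem_Icc.mpr hi)).le (hxpos j (Finset.mem_Icc.mpr hj)).le
      (hx.monotoneOn hi hj hij)
  have hcard := le_card_filter_mul_succ_neg_of_alternating hq halt
  refine ⟨_, Finset.filter_subset _ _, hcard, ?_⟩
  refine existsUnique_root_mem_Ioo_of_sign_changes (fun i hi => ?_)
    (hx.monotoneOn.pairwiseDisjoint_Ioo_succ.subset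
      (Finset.coe_subset.mpr (Finset.filter_subset _ _))) (fun i hi => (Finset.mem_filter.mp hi).2)
    (by rw [natDegree_laguerre]; omega)
  have hi := Finset.mem_Icc.mp (Finset.mem_filter.mp hi).1
  exact (hx ⟨hi.1, by omega⟩ ⟨by omega, by omega⟩ (by omega)).le

theorem laguerre_partial_interlacing_deg_pred_param_four
    (α : ℝ) (hα : -1 < α) (n : ℕ) (hn : 4 ≤ n)
    (hnc : ∀ t : ℝ, ¬((laguerre (α + 4) (n - 1)).eval t = 0 ∧ (laguerre α n).eval t = 0))
    (x : ℕ → ℝ)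
    (hxpos : ∀ i ∈ Finset.Icc 1 n, 0 < x i)
    (hxmono : ∀ i ∈ Finset.Icc 1 n, ∀ j ∈ Finset.Icc 1 n, i < j → x i < x j)
    (hxroots : ∀ t : ℝ, (laguerre α n).eval t = 0 ↔ ∃ i ∈ Finset.Icc 1 n, x i = t) :
    ∃ S : Finset ℕ, S ⊆ Finset.Icc 1 (n - 1) ∧ n - 2 ≤ S.card ∧
      ∀ i ∈ S, ∃! t : ℝ, t ∈ Set.Ioo (x i) (x (i + 1)) ∧
        (laguerre (α + 4) (n - 1)).eval t = 0 :=
  laguerre_partial_interlacing_deg_pred_param_four_general α hα n hnc x hxpos hxmono hxroots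
end
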